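/- For every real z ≠ 0 and all integers p ≥ 0 and ℓ ≥ 0: Σ_{k=0}^{ℓ} (−1)^k (2k+1)·[Σ_{m=0}^{p+2} c_m^{(p+2)}·(k−m+1)_{2m}]·[j_k(z)]² = −z²·Σ_{k=0}^{ℓ} (−1)^k (2k+1)·[Σ_{m=0}^{p} c_m^{(p)}·(k−m+1)_{2m}]·[j_k(z)]² + (1/2)(−1)^ℓ z²·[Σ_{m=0}^{p} c_m^{(p)}·(ℓ−m+1)_{2m+2}/(m+1)]·[j_ℓ(z)]² − (1/2)(−1)^ℓ z²·[Σ_{m=0}^{p} c_m^{(p)}·(ℓ−m)_{2m+2}/(m+1)]·[j_{ℓ+1}(z)]² + (−1)^ℓ (ℓ+1)·[Σ_{m=0}^{p} c_m^{(p)}·(ℓ−m)_{2m+3}/((m+1)(m+2))]·z·j_ℓ(z)·j_{ℓ+1}(z). -/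

import Mathlib

open Finset

/-- Auxiliary: `sphjAux z n` is the spherical Bessel function `j_{n-1}(z)`. -/
noncomputable def sphjAux (z : ℝ) : ℕ → ℝ
  | 0 => Real.cos z / z
  | 1 => Real.sin z / z
  | (n + 2) => ((2 * (n : ℝ) + 1) / z) * sphjAux z (n + 1) - sphjAux z n

/-- The spherical Bessel function `j_k(z)` for integer `k ≥ -1`. -/
noncomputable def sphj (k : ℤ) (z : ℝ) : ℝ := sphjAux z (k + 1).toNat

/-- The Pochhammer symbol `(f)_n = f (f+1) ⋯ (f+n-1)`, with `(f)_0 = 1`. -/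
noncomputable def poch (f : ℝ) (n : ℕ) : ℝ := ∏ i ∈ Finset.range n, (f + (i : ℝ))

/-- The coefficients `c_m^{(p)} = (2m-p+2)_{2p-2m} / (2^{2p-2m} m! (p-m)!)` for `0 ≤ m ≤ p`,
and `c_m^{(p)} = 0` for `m > p`. -/
noncomputable def cc (p m : ℕ) : ℝ :=
  if m ≤ p then
    poch (2 * (m : ℝ) - p + 2) (2 * (p - m)) /
      (2 ^ (2 * (p - m)) * (m.factorial : ℝ) * ((p - m).factorial : ℝ))
  else 0

lemma poch_zero (f : ℝ) : poch f 0 = 1 := by simp [poch]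

lemma poch_succ (f : ℝ) (n : ℕ) : poch f (n + 1) = poch f n * (f + n) := by
  rw [poch, poch, Finset.prod_range_succ]

lemma poch_one (f : ℝ) : poch f 1 = f := by simp [poch]

lemma poch_two (f : ℝ) : poch f 2 = f * (f + 1) := by
  rw [show (2:ℕ) = 1 + 1 from rfl, poch_succ, poch_one]; norm_num

lemma poch_add (f : ℝ) (a b : ℕ) : poch f (a + b) = poch f a * poch (f + a) b := by
  rw [poch, poch, poch, Finset.prod_range_add]
  congr 1
  refine Finset.prod_congr rfl fun i _ => ?_
  push_cast; ring

lemma poch_eq_zero {f : ℝ} {n : ℕ} (i : ℕ) (hi : i < n) (h : f + i = 0) : poch f n = 0 :=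
  Finset.prod_eq_zero (Finset.mem_range.2 hi) h

lemma poch_split_right2 (f : ℝ) (m : ℕ) :
    poch f (2*m+2) = poch f (2*m) * ((f + 2*m) * (f + 2*m + 1)) := by
  rw [poch_add f (2*m) 2, poch_two]; push_cast; ring

lemma poch_split_left2 (f : ℝ) (m : ℕ) :
    poch f (2*m+2) = f * (f+1) * poch (f+2) (2*m) := by
  rw [show 2*m+2 = 2+2*m by ring, poch_add f 2 (2*m), poch_two]
  push_cast; ring

lemma poch_split23 (f : ℝ) (m : ℕ) :
    poch f (2*m+3) = poch f (2*m+2) * (f + 2*m + 2) := by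
  rw [show 2*m+3 = (2*m+2)+1 by ring, poch_succ]; push_cast; ring

lemma poch_split13 (f : ℝ) (m : ℕ) :
    poch f (2*m+3) = f * poch (f+1) (2*m+2) := by
  rw [show 2*m+3 = 1+(2*m+2) by ring, poch_add f 1 (2*m+2), poch_one]
  norm_num

lemma poch_split4 (f : ℝ) (m : ℕ) :
    poch f (2*m+4) = f * poch (f+1) (2*m+2) * (f + 2*m + 3) := by
  rw [show 2*m+4 = (2*m+3)+1 by ring, poch_succ, poch_split13]; push_cast; ring


lemma cc_top (p : ℕ) : cc p (p+1) = 0 := by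
  rw [cc, if_neg (by omega)]

lemma cc_diag (p : ℕ) : cc p p = 1 / (p.factorial : ℝ) := by
  rw [cc, if_pos le_rfl, Nat.sub_self]
  simp [poch_zero]

lemma cc_zero2 (p : ℕ) : cc (p+2) 0 = 0 := by
  rw [cc, if_pos (by omega)]
  rw [poch_eq_zero p (by omega) (by push_cast; ring)]
  exact zero_div _

lemma cc_one2 (p : ℕ) : cc (p+2) 1 = 3/2 * cc p 0 := by
  match p with
  | 0 =>
    norm_num [cc, poch, Finset.prod_range_succ]
  | 1 =>
    norm_num [cc, poch, Finset.prod_range_succ]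
  | (q+2) =>
    rw [cc_zero2, mul_zero, cc, if_pos (by omega)]
    rw [poch_eq_zero q (by omega) (by push_cast; ring)]
    exact zero_div _

lemma cc_rec (p m : ℕ) (h : m ≤ p) :
    cc (p+2) (m+2) = (2*(m:ℝ)+5)/(2*(m:ℝ)+4) * cc p (m+1) + cc p m / (((m:ℝ)+2)*((m:ℝ)+1)) := by
  have hm1 : ((m:ℝ)+1) ≠ 0 := by positivity
  have hm2 : ((m:ℝ)+2) ≠ 0 := by positivity
  have hfm : (m.factorial : ℝ) ≠ 0 := Nat.cast_ne_zero.2 m.factorial_ne_zero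
  rcases eq_or_lt_of_le h with rfl | hlt
  · rw [cc_top, cc_diag, cc, if_pos le_rfl, Nat.sub_self]
    simp only [Nat.mul_zero, poch_zero, pow_zero, Nat.factorial_zero, Nat.cast_one]
    rw [show m+2 = m+1+1 by omega, Nat.factorial_succ, Nat.factorial_succ]
    push_cast
    field_simp
    ring
  · obtain ⟨q, rfl⟩ : ∃ q, p = m + 1 + q := ⟨p - (m+1), by omega⟩
    have hq1 : ((q:ℝ)+1) ≠ 0 := by positivity
    have hfq : (q.factorial : ℝ) ≠ 0 := Nat.cast_ne_zero.2 q.factorial_ne_zero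
    have hpw : ((2:ℝ))^(2*q) ≠ 0 := by positivity
    rw [cc, cc, cc, if_pos (by omega), if_pos (by omega), if_pos (by omega)]
    rw [show m+1+q+2 - (m+2) = q+1 by omega, show m+1+q - (m+1) = q by omega,
        show m+1+q - m = q+1 by omega]
    rw [show 2*(q+1) = 2*q+2 by ring]
    rw [show 2 * ((m+2 : ℕ) : ℝ) - ((m+1+q+2 : ℕ) : ℝ) + 2 = (m:ℝ) - q + 3 by push_cast; ring]
    rw [show 2 * ((m+1 : ℕ) : ℝ) - ((m+1+q : ℕ) : ℝ) + 2 = (m:ℝ) - q + 3 by push_cast; ring]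
    rw [show 2 * ((m : ℕ) : ℝ) - ((m+1+q : ℕ) : ℝ) + 2 = (m:ℝ) - q + 1 by push_cast; ring]
    rw [poch_split_right2 ((m:ℝ) - q + 3) q, poch_split_left2 ((m:ℝ) - q + 1) q]
    rw [show (m:ℝ) - q + 1 + 2 = (m:ℝ) - q + 3 by ring]
    rw [show m+2 = m+1+1 by omega, Nat.factorial_succ, Nat.factorial_succ, Nat.factorial_succ]
    rw [show (2:ℝ)^(2*q+2) = 4 * 2^(2*q) by ring]
    push_cast
    field_simp
    ring

noncomputable def SA2 (p t : ℕ) : ℝ :=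
  ∑ m ∈ Finset.range (p + 3), cc (p + 2) m * poch ((t : ℝ) - m + 1) (2 * m)
noncomputable def SA (p t : ℕ) : ℝ :=
  ∑ m ∈ Finset.range (p + 1), cc p m * poch ((t : ℝ) - m + 1) (2 * m)
noncomputable def SP (p t : ℕ) : ℝ :=
  ∑ m ∈ Finset.range (p + 1), cc p m * poch ((t : ℝ) - m + 1) (2 * m + 2) / ((m : ℝ) + 1)
noncomputable def SQ (p t : ℕ) : ℝ :=
  ∑ m ∈ Finset.range (p + 1), cc p m * poch ((t : ℝ) - m) (2 * m + 2) / ((m : ℝ) + 1)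
noncomputable def SR (p t : ℕ) : ℝ :=
  ∑ m ∈ Finset.range (p + 1), cc p m * poch ((t : ℝ) - m) (2 * m + 3) / (((m : ℝ) + 1) * ((m : ℝ) + 2))
noncomputable def FF (p n j : ℕ) : ℝ :=
  (2*(j:ℝ)+3)/(2*(j:ℝ)+2) * cc p j * poch ((n:ℝ) - j + 1) (2*j+2)

lemma SA2_zero (p : ℕ) : SA2 p 0 = 0 := by
  refine Finset.sum_eq_zero fun m hm => ?_
  match m with
  | 0 => rw [cc_zero2, zero_mul]
  | (j+1) => rw [poch_eq_zero j (by omega) (by push_cast; ring), mul_zero]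

lemma SA_zero (p : ℕ) : SA p 0 = cc p 0 := by
  rw [SA, Finset.sum_range_succ']
  rw [Finset.sum_eq_zero (fun i _ => by
    rw [poch_eq_zero i (by omega) (by push_cast; ring), mul_zero])]
  simp [poch_zero]

lemma SP_zero (p : ℕ) : SP p 0 = 2 * cc p 0 := by
  rw [SP, Finset.sum_range_succ']
  rw [Finset.sum_eq_zero (fun i _ => by
    rw [poch_eq_zero i (by omega) (by push_cast; ring), mul_zero, zero_div])]
  rw [show 2*0+2 = 2 by rfl, poch_two]
  push_cast
  norm_num
  ring

lemma SQ_zero (p : ℕ) : SQ p 0 = 0 := by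
  refine Finset.sum_eq_zero fun m hm => ?_
  rw [poch_eq_zero m (by omega) (by push_cast; ring), mul_zero, zero_div]

lemma SR_zero (p : ℕ) : SR p 0 = 0 := by
  refine Finset.sum_eq_zero fun m hm => ?_
  rw [poch_eq_zero m (by omega) (by push_cast; ring), mul_zero, zero_div]

lemma e1 (p n : ℕ) : SQ p (n+1) = SP p n := by
  refine Finset.sum_congr rfl fun m _ => ?_
  rw [show ((n+1:ℕ):ℝ) - ↑m = (n:ℝ) - ↑m + 1 by push_cast; ring]

lemma e2 (p n : ℕ) : SP p (n+1) - SQ p n = 2*(2*(n:ℝ)+3) * SA p (n+1) := by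
  rw [SP, SQ, SA, Finset.mul_sum, ← Finset.sum_sub_distrib]
  refine Finset.sum_congr rfl fun m _ => ?_
  have hm : ((m:ℝ)+1) ≠ 0 := by positivity
  rw [show ((n+1:ℕ):ℝ) - ↑m + 1 = (n:ℝ) - ↑m + 2 by push_cast; ring]
  rw [poch_split_right2 ((n:ℝ) - ↑m + 2) m, poch_split_left2 ((n:ℝ) - ↑m) m]
  field_simp
  ring

lemma e3 (p n : ℕ) : (2*(n:ℝ)+3) * SQ p (n+1) = ((n:ℝ)+2) * SR p (n+1) - ((n:ℝ)+1) * SR p n := by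
  rw [SQ, SR, SR, Finset.mul_sum, Finset.mul_sum, Finset.mul_sum, ← Finset.sum_sub_distrib]
  refine Finset.sum_congr rfl fun m _ => ?_
  have hm1 : ((m:ℝ)+1) ≠ 0 := by positivity
  have hm2 : ((m:ℝ)+2) ≠ 0 := by positivity
  rw [show ((n+1:ℕ):ℝ) - ↑m = (n:ℝ) - ↑m + 1 by push_cast; ring]
  rw [poch_split23 ((n:ℝ) - ↑m + 1) m, poch_split13 ((n:ℝ) - ↑m) m]
  field_simp
  ring

lemma e4 (p n : ℕ) : SA2 p (n+1) = -(1/2)*(2*(n:ℝ)+3) * SQ p (n+1) + ((n:ℝ)+2) * SR p (n+1) := by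
  have hR : -(1/2)*(2*(n:ℝ)+3) * SQ p (n+1) + ((n:ℝ)+2) * SR p (n+1)
      = ∑ m ∈ Finset.range (p+1),
          (FF p n m + cc p m / (((m:ℝ)+1)*((m:ℝ)+2)) * poch ((n:ℝ) - ↑m) (2*m+4)) := by
    rw [SQ, SR, Finset.mul_sum, Finset.mul_sum, ← Finset.sum_add_distrib]
    refine Finset.sum_congr rfl fun m _ => ?_
    have hm1 : ((m:ℝ)+1) ≠ 0 := by positivity
    have hm2 : ((m:ℝ)+2) ≠ 0 := by positivity
    have hm3 : (2*(m:ℝ)+2) ≠ 0 := by positivity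
    rw [FF, show ((n+1:ℕ):ℝ) - ↑m = (n:ℝ) - ↑m + 1 by push_cast; ring]
    rw [poch_split23 ((n:ℝ) - ↑m + 1) m, poch_split4 ((n:ℝ) - ↑m) m]
    field_simp
    ring
  have hstep2 : ∀ m ∈ Finset.range (p+1),
      cc (p+2) (m+1+1) * poch (((n+1:ℕ):ℝ) - ↑(m+1+1) + 1) (2*(m+1+1))
      = FF p n (m+1) + cc p m / (((m:ℝ)+1)*((m:ℝ)+2)) * poch ((n:ℝ) - ↑m) (2*m+4) := by
    intro m hm
    have hmp : m ≤ p := by simp only [Finset.mem_range] at hm; omega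
    have hm1 : ((m:ℝ)+1) ≠ 0 := by positivity
    have hm2 : ((m:ℝ)+2) ≠ 0 := by positivity
    rw [show m+1+1 = m+2 by omega, cc_rec p m hmp, FF]
    rw [show ((n+1:ℕ):ℝ) - ↑(m+2:ℕ) + 1 = (n:ℝ) - ↑m by push_cast; ring]
    rw [show 2*(m+2) = 2*m+4 by omega]
    rw [show ((n:ℝ)) - ↑(m+1:ℕ) + 1 = (n:ℝ) - ↑m by push_cast; ring]
    rw [show 2*(m+1)+2 = 2*m+4 by omega]
    rw [poch_split4 ((n:ℝ) - ↑m) m]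
    have hm4 : (2*((m+1:ℕ):ℝ)+2) ≠ 0 := by positivity
    push_cast at hm4 ⊢
    field_simp
    ring
  have hFtop : FF p n (p+1) = 0 := by rw [FF, cc_top]; ring
  have h1 := Finset.sum_range_succ' (FF p n) (p+1)
  have h2 := Finset.sum_range_succ (FF p n) (p+1)
  have hG1 : cc (p+2) (0+1) * poch (((n+1:ℕ):ℝ) - ↑(0+1:ℕ) + 1) (2*(0+1)) = FF p n 0 := by
    rw [show (0:ℕ)+1 = 1 by rfl, cc_one2, FF]
    rw [show ((n+1:ℕ):ℝ) - ↑(1:ℕ) + 1 = (n:ℝ) - ↑(0:ℕ) + 1 by push_cast; ring]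
    norm_num
  have hG0 : cc (p+2) 0 * poch (((n+1:ℕ):ℝ) - ↑(0:ℕ) + 1) (2*0) = 0 := by
    rw [cc_zero2, zero_mul]
  rw [hR, SA2, show p+3 = p+2+1 by omega, Finset.sum_range_succ',
      show p+2 = p+1+1 by omega, Finset.sum_range_succ']
  rw [Finset.sum_congr rfl hstep2, Finset.sum_add_distrib, hG1, hG0,
      Finset.sum_add_distrib]
  have : ∑ m ∈ Finset.range (p+1), FF p n (m+1) = ∑ m ∈ Finset.range (p+1), FF p n m - FF p n 0 := by
    rw [h2, hFtop] at h1 -- ?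
    linarith [h1]
  rw [this]
  ring

lemma sphjAux_rec (z : ℝ) (n : ℕ) :
    sphjAux z (n+2) = ((2*(n:ℝ)+1)/z) * sphjAux z (n+1) - sphjAux z n := rfl

lemma sphj_rec (z : ℝ) (hz : z ≠ 0) (n : ℕ) :
    z * sphj ((n:ℤ)+1+1) z = (2*(n:ℝ)+3) * sphj ((n:ℤ)+1) z - z * sphj (n:ℤ) z := by
  have h1 : ((n:ℤ)+1+1+1).toNat = (n+1)+2 := by omega
  have h2 : ((n:ℤ)+1+1).toNat = n+2 := by omega
  have h3 : ((n:ℤ)+1).toNat = n+1 := by omega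
  simp only [sphj, h1, h2, h3, sphjAux_rec]
  push_cast
  field_simp
  ring

theorem aux_thm (z : ℝ) (hz : z ≠ 0) (p ℓ : ℕ) :
    ∑ k ∈ Finset.range (ℓ + 1), (-1:ℝ)^k * (2*(k:ℝ)+1) * SA2 p k * (sphj k z)^2
      = -z^2 * ∑ k ∈ Finset.range (ℓ+1), (-1:ℝ)^k * (2*(k:ℝ)+1) * SA p k * (sphj k z)^2
        + (1/2) * (-1:ℝ)^ℓ * z^2 * SP p ℓ * (sphj ℓ z)^2
        - (1/2) * (-1:ℝ)^ℓ * z^2 * SQ p ℓ * (sphj (ℓ+1) z)^2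
        + (-1:ℝ)^ℓ * ((ℓ:ℝ)+1) * SR p ℓ * z * sphj ℓ z * sphj (ℓ+1) z := by
  induction ℓ with
  | zero =>
    rw [Finset.sum_range_one, Finset.sum_range_one, SA2_zero, SA_zero, SP_zero, SQ_zero, SR_zero]
    push_cast
    ring
  | succ n ih =>
    rw [Finset.sum_range_succ, ih]
    conv_rhs => rw [Finset.sum_range_succ]
    have hc : ((n+1:ℕ):ℤ) = (n:ℤ)+1 := by push_cast; ring
    rw [hc]
    have hrec := sphj_rec z hz n
    push_cast
    linear_combination
      (-((-1:ℝ)^n)) * ( (2*(n:ℝ)+3) * (sphj ((n:ℤ)+1) z)^2 * (e4 p n)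
        - (1/2)*z^2*(sphj ((n:ℤ)+1) z)^2 * (e2 p n)
        + (1/2)*z^2*(sphj (n:ℤ) z)^2 * (e1 p n)
        - z*(sphj (n:ℤ) z)*(sphj ((n:ℤ)+1) z) * (e3 p n)
        + ((1/2)*(SQ p (n+1))*(z*(sphj ((n:ℤ)+1+1) z) + (2*(n:ℝ)+3)*(sphj ((n:ℤ)+1) z)
            - z*(sphj (n:ℤ) z)) - ((n:ℝ)+2)*(SR p (n+1))*(sphj ((n:ℤ)+1) z)) * hrec )


/-- Recurrence step of the third hierarchy of sum rules. -/
theorem third_hierarchy_recurrence (z : ℝ) (hz : z ≠ 0) (p ℓ : ℕ) :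
    ∑ k ∈ Finset.range (ℓ + 1),
        (-1 : ℝ) ^ k * (2 * (k : ℝ) + 1) *
          (∑ m ∈ Finset.range (p + 3), cc (p + 2) m * poch ((k : ℝ) - m + 1) (2 * m)) *
          (sphj k z) ^ 2 =
      -z ^ 2 * ∑ k ∈ Finset.range (ℓ + 1),
          (-1 : ℝ) ^ k * (2 * (k : ℝ) + 1) *
            (∑ m ∈ Finset.range (p + 1), cc p m * poch ((k : ℝ) - m + 1) (2 * m)) *
            (sphj k z) ^ 2 +
        (1 / 2) * (-1 : ℝ) ^ ℓ * z ^ 2 *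
          (∑ m ∈ Finset.range (p + 1),
            cc p m * poch ((ℓ : ℝ) - m + 1) (2 * m + 2) / ((m : ℝ) + 1)) *
          (sphj ℓ z) ^ 2 -
        (1 / 2) * (-1 : ℝ) ^ ℓ * z ^ 2 *
          (∑ m ∈ Finset.range (p + 1),
            cc p m * poch ((ℓ : ℝ) - m) (2 * m + 2) / ((m : ℝ) + 1)) *
          (sphj (ℓ + 1) z) ^ 2 +
        (-1 : ℝ) ^ ℓ * ((ℓ : ℝ) + 1) *
          (∑ m ∈ Finset.range (p + 1),
            cc p m * poch ((ℓ : ℝ) - m) (2 * m + 3) / (((m : ℝ) + 1) * ((m : ℝ) + 2))) *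
          z * sphj ℓ z * sphj (ℓ + 1) z := by
  have h := aux_thm z hz p ℓ
  simpa only [SA2, SA, SP, SQ, SR] using h
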